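/- Under the same assumptions, if P₀(s) = |ψ₀(s)⟩⟨ψ₀(s)| is the ground-state projector, then ∂_s P₀(s) = i[D_s, P₀(s)]. -/

import Mathlib

/-!
In an eigenbasis of `H`, conjugation by `e^{iHt}` multiplies the `(i, j)` matrix element of `∂H`
by `e^{i(E_i - E_j)t}`, so `⟨i|D|j⟩ = -i Ŵ(E_i - E_j) ⟨i|∂H|j⟩`, where `Ŵ` is the Fourier transform
of `t ↦ F(ΔE t)`. Oddness of `F` gives `Ŵ(0) = 0`, and across the gap `Ŵ(ω) = -1/ω`. First-order
perturbation theory, `⟨i|∂H|0⟩ = (E₀ - E_i) ⟨i|∂ψ₀⟩` for `i ≠ 0`, then turns the matrix elements of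
`i[D, P₀]` into those of `∂P₀ = |∂ψ₀⟩⟨ψ₀| + |ψ₀⟩⟨∂ψ₀|`; on the diagonal entry `(0, 0)` both sides
vanish, the right one because `‖ψ₀‖ = 1`.
-/

open MeasureTheory

/-- The exact quasi-adiabatic continuation operator
`D = -i ∫ F(ΔE t) e^{iHt} (∂H) e^{-iHt} dt`. -/
noncomputable def qaOp {V : Type*} [NormedAddCommGroup V] [InnerProductSpace ℂ V]
    [FiniteDimensional ℂ V] (F : ℝ → ℂ) (ΔE : ℝ) (Hs Hder : V →L[ℂ] V) : V →L[ℂ] V :=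
  (-Complex.I) • ∫ t : ℝ, F (ΔE * t) •
    (NormedSpace.exp ((Complex.I * (t : ℂ)) • Hs) ∘L Hder ∘L
      NormedSpace.exp ((-(Complex.I * (t : ℂ))) • Hs))

open Complex InnerProductSpace
open scoped ComplexConjugate

theorem NormedSpace.exp_apply_of_apply_eq_smul {𝕜 E : Type*} [RCLike 𝕜] [NormedAddCommGroup E]
    [NormedSpace 𝕜 E] [CompleteSpace E] {A : E →L[𝕜] E} {c : 𝕜} {x : E} (h : A x = c • x) :
    NormedSpace.exp A x = NormedSpace.exp c • x := by
  have hpow : ∀ m : ℕ, (A ^ m) x = c ^ m • x := by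
    intro m
    induction m with
    | zero => simp
    | succ m ih =>
      rw [pow_succ, pow_succ', ContinuousLinearMap.mul_def, ContinuousLinearMap.comp_apply, h,
        map_smul, ih, smul_smul]
  refine HasSum.unique ?_ ((NormedSpace.exp_series_hasSum_exp' (𝕂 := 𝕜) c).smul_const x)
  simpa [hpow, smul_smul] using
    (NormedSpace.exp_series_hasSum_exp' (𝕂 := 𝕜) A).mapL (ContinuousLinearMap.apply 𝕜 E x)

theorem IsSelfAdjoint.exp_I_mul_smul_mem_unitary {A : Type*} [NormedRing A] [NormedAlgebra ℂ A]
    [StarRing A] [ContinuousStar A] [CompleteSpace A] [StarModule ℂ A] {a : A}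
    (ha : IsSelfAdjoint a) (t : ℝ) : NormedSpace.exp ((I * t) • a) ∈ unitary A := by
  have := (selfAdjoint.expUnitary ⟨(t : ℂ) • a, IsSelfAdjoint.smul (conj_ofReal t) ha⟩).prop
  rwa [selfAdjoint.expUnitary_coe, smul_smul] at this

section Hilbert

variable {V : Type*} [NormedAddCommGroup V] [InnerProductSpace ℂ V] [CompleteSpace V]

theorem IsSelfAdjoint.inner_exp_smul_apply {H : V →L[ℂ] V} (hH : IsSelfAdjoint H) {x : V} {E : ℝ}
    (hx : H x = (E : ℂ) • x) (z : ℂ) (w : V) :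
    inner ℂ x (NormedSpace.exp (z • H) w) = Complex.exp (z * E) * inner ℂ x w := by
  have hx' : (star z • H) x = (star z * E) • x := by rw [smul_apply, hx, smul_smul]
  rw [← ContinuousLinearMap.adjoint_inner_left, ← ContinuousLinearMap.star_eq_adjoint,
    NormedSpace.star_exp, star_smul, hH.star_eq, NormedSpace.exp_apply_of_apply_eq_smul hx',
    inner_smul_left, ← Complex.exp_eq_exp_ℂ, ← Complex.exp_conj]
  simp

noncomputable def heisenberg (H A : V →L[ℂ] V) (t : ℝ) : V →L[ℂ] V :=
  NormedSpace.exp ((I * t) • H) ∘L A ∘L NormedSpace.exp ((-(I * t)) • H)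

theorem continuous_heisenberg (H A : V →L[ℂ] V) : Continuous (heisenberg H A) := by
  let _ : NormedAlgebra ℚ (V →L[ℂ] V) := .restrictScalars ℚ ℂ _
  unfold heisenberg
  fun_prop

theorem IsSelfAdjoint.norm_heisenberg {H : V →L[ℂ] V} (hH : IsSelfAdjoint H) (A : V →L[ℂ] V)
    (t : ℝ) : ‖heisenberg H A t‖ = ‖A‖ := by
  have hU := hH.exp_I_mul_smul_mem_unitary t
  have hU' := hH.exp_I_mul_smul_mem_unitary (-t)
  rw [ofReal_neg, mul_neg] at hU'
  rw [heisenberg, ← ContinuousLinearMap.mul_def, ← ContinuousLinearMap.mul_def,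
    CStarRing.norm_mem_unitary_mul _ hU, CStarRing.norm_mul_mem_unitary _ hU']

theorem IsSelfAdjoint.inner_heisenberg_apply {H : V →L[ℂ] V} (hH : IsSelfAdjoint H)
    (A : V →L[ℂ] V) {x y : V} {Ex Ey : ℝ} (hx : H x = (Ex : ℂ) • x) (hy : H y = (Ey : ℂ) • y)
    (t : ℝ) :
    inner ℂ x (heisenberg H A t y) = Complex.exp (I * (Ex - Ey : ℝ) * t) * inner ℂ x (A y) := by
  have hy' : ((-(I * t)) • H) y = (-(I * t) * Ey) • y := by rw [smul_apply, hy, smul_smul]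
  rw [heisenberg, ContinuousLinearMap.comp_apply, ContinuousLinearMap.comp_apply,
    NormedSpace.exp_apply_of_apply_eq_smul hy', map_smul, hH.inner_exp_smul_apply hx,
    inner_smul_right, ← Complex.exp_eq_exp_ℂ, ← mul_assoc, ← Complex.exp_add]
  push_cast
  ring_nf

theorem IsSelfAdjoint.integrable_smul_heisenberg {f : ℝ → ℂ} (hf : Integrable f)
    {H : V →L[ℂ] V} (hH : IsSelfAdjoint H) (A : V →L[ℂ] V) :
    Integrable fun t => f t • heisenberg H A t :=
  hf.smul_bdd ‖A‖ (continuous_heisenberg H A).aestronglyMeasurable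
    (ae_of_all _ fun t => (hH.norm_heisenberg A t).le)

theorem qaOp_eq_integral_heisenberg [FiniteDimensional ℂ V] (F : ℝ → ℂ) (ΔE : ℝ)
    (H A : V →L[ℂ] V) : qaOp F ΔE H A = -I • ∫ t : ℝ, F (ΔE * t) • heisenberg H A t :=
  rfl

noncomputable def qaWeight (F : ℝ → ℂ) (ΔE ω : ℝ) : ℂ :=
  ∫ t : ℝ, F (ΔE * t) * Complex.exp (I * ω * t)

theorem qaWeight_zero {F : ℝ → ℂ} (hF : ∀ t, F (-t) = -F t) (ΔE : ℝ) : qaWeight F ΔE 0 = 0 := by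
  have h := integral_neg_eq_self (fun t => F (ΔE * t)) volume
  simp only [mul_neg, hF, integral_neg] at h
  simpa [qaWeight] using CharZero.eq_neg_self_iff.mp h.symm

theorem qaWeight_eq_neg_inv {F : ℝ → ℂ}
    (hF : ∀ ω : ℝ, 1 ≤ |ω| → ∫ t : ℝ, F t * Complex.exp (I * ω * t) = -1 / (ω : ℂ))
    {ΔE ω : ℝ} (hΔE : 0 < ΔE) (hω : ΔE ≤ |ω|) : qaWeight F ΔE ω = -1 / (ω : ℂ) := by
  have hΔE' : (ΔE : ℂ) ≠ 0 := by exact_mod_cast hΔE.ne'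
  have hω1 : 1 ≤ |ω / ΔE| := by rwa [abs_div, abs_of_pos hΔE, one_le_div hΔE]
  have hscale : ∀ t : ℝ, I * ω * t = I * (ω / ΔE : ℝ) * (ΔE * t : ℝ) := fun t => by
    push_cast
    field_simp
  simp_rw [qaWeight, hscale]
  rw [Measure.integral_comp_mul_left (fun u => F u * Complex.exp (I * (ω / ΔE : ℝ) * u)),
    hF _ hω1, abs_of_pos (inv_pos.mpr hΔE), real_smul]
  push_cast
  field_simp

theorem IsSelfAdjoint.inner_qaOp_apply [FiniteDimensional ℂ V] {F : ℝ → ℂ} {ΔE : ℝ}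
    (hF : Integrable fun t => F (ΔE * t)) {H : V →L[ℂ] V} (hH : IsSelfAdjoint H)
    (A : V →L[ℂ] V) {x y : V} {Ex Ey : ℝ} (hx : H x = (Ex : ℂ) • x) (hy : H y = (Ey : ℂ) • y) :
    inner ℂ x (qaOp F ΔE H A y) = -I * (qaWeight F ΔE (Ex - Ey) * inner ℂ x (A y)) := by
  let L : (V →L[ℂ] V) →L[ℂ] ℂ := innerSL ℂ x ∘L ContinuousLinearMap.apply ℂ V y
  have hL : ∀ B : V →L[ℂ] V, L B = inner ℂ x (B y) := fun _ => rfl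
  rw [qaOp_eq_integral_heisenberg, smul_apply, inner_smul_right, ← hL,
    ← L.integral_comp_comm (hH.integrable_smul_heisenberg hF A)]
  simp only [hL, smul_apply, inner_smul_right, hH.inner_heisenberg_apply A hx hy, qaWeight]
  rw [← integral_mul_const]
  congr 2 with t
  ring

theorem IsSelfAdjoint.inner_qaOp_apply_of_eq [FiniteDimensional ℂ V] {F : ℝ → ℂ}
    (hFodd : ∀ t, F (-t) = -F t) {ΔE : ℝ} (hF : Integrable fun t => F (ΔE * t))
    {H : V →L[ℂ] V} (hH : IsSelfAdjoint H) (A : V →L[ℂ] V) {x y : V} {E : ℝ}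
    (hx : H x = (E : ℂ) • x) (hy : H y = (E : ℂ) • y) : inner ℂ x (qaOp F ΔE H A y) = 0 := by
  rw [hH.inner_qaOp_apply hF A hx hy, sub_self, qaWeight_zero hFodd, zero_mul, mul_zero]

theorem IsSelfAdjoint.inner_qaOp_apply_of_inner_apply_eq [FiniteDimensional ℂ V] {F : ℝ → ℂ}
    (hFhat : ∀ ω : ℝ, 1 ≤ |ω| → ∫ t : ℝ, F t * Complex.exp (I * ω * t) = -1 / (ω : ℂ))
    {ΔE : ℝ} (hΔE : 0 < ΔE) (hF : Integrable fun t => F (ΔE * t)) {H : V →L[ℂ] V}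
    (hH : IsSelfAdjoint H) {A : V →L[ℂ] V} {x y : V} {Ex Ey : ℝ} (hx : H x = (Ex : ℂ) • x)
    (hy : H y = (Ey : ℂ) • y) (hgap : ΔE ≤ |Ex - Ey|) {w : ℂ}
    (hA : inner ℂ x (A y) = ((Ex - Ey : ℝ) : ℂ) * w) : inner ℂ x (qaOp F ΔE H A y) = I * w := by
  have hne : ((Ex - Ey : ℝ) : ℂ) ≠ 0 := by exact_mod_cast abs_pos.mp (hΔE.trans_le hgap)
  rw [hH.inner_qaOp_apply hF A hx hy, qaWeight_eq_neg_inv hFhat hΔE hgap, hA]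
  field_simp

theorem HasDerivAt.complex_clm_apply {E F : Type*} [NormedAddCommGroup E] [NormedSpace ℂ E]
    [NormedAddCommGroup F] [NormedSpace ℂ F] {c : ℝ → E →L[ℂ] F} {c' : E →L[ℂ] F} {u : ℝ → E}
    {u' : E} {x : ℝ} (hc : HasDerivAt c c' x) (hu : HasDerivAt u u' x) :
    HasDerivAt (fun y => c y (u y)) (c' (u x) + c x u') x :=
  ((ContinuousLinearMap.restrictScalarsL ℂ E F ℝ ℝ).hasFDerivAt.comp_hasDerivAt x hc).clm_apply hu

theorem HasDerivAt.isSelfAdjoint {A : Type*} [NormedAddCommGroup A] [NormedSpace ℝ A]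
    [StarAddMonoid A] [ContinuousStar A] [StarModule ℝ A] {f : ℝ → A} {f' : A} {s : ℝ}
    (hf : HasDerivAt f f' s) (h : ∀ r, IsSelfAdjoint (f r)) : IsSelfAdjoint f' := by
  have hstar := hf.star
  simp only [fun r => (h r).star_eq] at hstar
  exact hstar.unique hf

theorem inner_add_inner_eq_zero_of_norm_eq_one {𝕜 E : Type*} [RCLike 𝕜]
    [NormedAddCommGroup E] [InnerProductSpace 𝕜 E] [NormedSpace ℝ E] {ψ : ℝ → E} {ψ' : E}
    {s : ℝ} (hψ : HasDerivAt ψ ψ' s) (hnorm : ∀ r, ‖ψ r‖ = 1) :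
    inner 𝕜 (ψ s) ψ' + inner 𝕜 ψ' (ψ s) = 0 := by
  have hconst : (fun r => inner 𝕜 (ψ r) (ψ r)) = fun _ => (1 : 𝕜) := by
    funext r
    rw [inner_self_eq_norm_sq_to_K, hnorm]
    simp
  have h := hψ.inner 𝕜 hψ
  rw [hconst] at h
  exact h.unique (hasDerivAt_const s 1)

theorem inner_deriv_apply_eq_of_eigenvector {H : ℝ → V →L[ℂ] V} {H' : V →L[ℂ] V}
    {ψ : ℝ → V} {ψ' : V} {E : ℝ → ℝ} {s : ℝ} (hH : HasDerivAt H H' s) (hψ : HasDerivAt ψ ψ' s)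
    (hnorm : ∀ r, ‖ψ r‖ = 1) (heig : ∀ r, H r (ψ r) = (E r : ℂ) • ψ r)
    (hsa : IsSelfAdjoint (H s)) {φ : V} {Eφ : ℝ} (hφ : H s φ = (Eφ : ℂ) • φ)
    (horth : inner ℂ φ (ψ s) = 0) :
    inner ℂ φ (H' (ψ s)) = ((E s - Eφ : ℝ) : ℂ) * inner ℂ φ ψ' := by
  -- the normalization makes `E` differentiable, as `E r = ⟪ψ r, H r (ψ r)⟫`
  have hE : (fun r => (E r : ℂ)) = fun r => inner ℂ (ψ r) (H r (ψ r)) := by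
    funext r
    rw [heig, inner_smul_right, inner_self_eq_norm_sq_to_K, hnorm]
    simp
  have hHψ := hH.complex_clm_apply hψ
  have hEψ := (hE ▸ hψ.inner ℂ hHψ).smul hψ
  rw [show (fun r => H r (ψ r)) = (fun r => (E r : ℂ)) • ψ from funext heig] at hHψ
  have hdiff := congrArg (inner ℂ φ) (hHψ.unique hEψ)
  have hφψ' : inner ℂ φ (H s ψ') = Eφ * inner ℂ φ ψ' := by
    rw [← ContinuousLinearMap.adjoint_inner_left, ← ContinuousLinearMap.star_eq_adjoint,
      hsa.star_eq, hφ, inner_smul_left, conj_ofReal]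
  rw [inner_add_right, inner_add_right, inner_smul_right, inner_smul_right, horth, mul_zero,
    add_zero, hφψ'] at hdiff
  push_cast
  linear_combination hdiff

end Hilbert

theorem hasDerivAt_rankOne {V : Type*} [NormedAddCommGroup V] [InnerProductSpace ℂ V]
    {x y : ℝ → V} {x' y' : V} {s : ℝ} (hx : HasDerivAt x x' s) (hy : HasDerivAt y y' s) :
    HasDerivAt (fun r => rankOne ℂ (x r) (y r)) (rankOne ℂ x' (y s) + rankOne ℂ (x s) y') s := by
  have hinner : HasDerivAt (fun r => innerSL ℂ (y r)) (innerSL ℂ y') s :=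
    (AddMonoidHom.toRealLinearMap (innerSL ℂ (E := V)).toLinearMap.toAddMonoidHom
      (innerSL ℂ).continuous).hasFDerivAt.comp_hasDerivAt s hy
  have hb := ((isBoundedBilinearMap_smulRight (𝕜 := ℂ) (E := V) (F := V)).hasFDerivAt
    (innerSL ℂ (y s), x s)).restrictScalars ℝ
  refine (hb.comp_hasDerivAt s (hinner.prodMk hx)).congr_deriv ?_
  simp [IsBoundedBilinearMap.deriv_apply, rankOne_def, add_comm]

theorem ContinuousLinearMap.ext_inner_basis {𝕜 E ι : Type*} [RCLike 𝕜] [NormedAddCommGroup E]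
    [InnerProductSpace 𝕜 E] (b : Module.Basis ι 𝕜 E) {A B : E →L[𝕜] E}
    (h : ∀ i j, inner 𝕜 (b i) (A (b j)) = inner 𝕜 (b i) (B (b j))) : A = B :=
  ContinuousLinearMap.coe_injective (b.ext fun j => ext_inner_left_basis b (h · j))

theorem I_smul_commutator_rankOne_self {V ι : Type*} [NormedAddCommGroup V]
    [InnerProductSpace ℂ V] {ψ : ι → V} (hON : Orthonormal ℂ ψ)
    (hspan : ⊤ ≤ Submodule.span ℂ (Set.range ψ)) (i₀ : ι) (D : V →L[ℂ] V) (v : V)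
    (hdiag : inner ℂ (ψ i₀) (D (ψ i₀)) = 0)
    (hcol : ∀ i, i ≠ i₀ → inner ℂ (ψ i) (D (ψ i₀)) = -I * inner ℂ (ψ i) v)
    (hrow : ∀ j, j ≠ i₀ → inner ℂ (ψ i₀) (D (ψ j)) = I * inner ℂ v (ψ j))
    (hv : inner ℂ (ψ i₀) v + inner ℂ v (ψ i₀) = 0) :
    I • (D ∘L rankOne ℂ (ψ i₀) (ψ i₀) - rankOne ℂ (ψ i₀) (ψ i₀) ∘L D) =
      rankOne ℂ v (ψ i₀) + rankOne ℂ (ψ i₀) v := by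
  classical
  refine ContinuousLinearMap.ext_inner_basis (Module.Basis.mk hON.linearIndependent hspan)
    fun i j => ?_
  simp only [Module.Basis.mk_apply, smul_apply, sub_apply, add_apply,
    ContinuousLinearMap.comp_apply, rankOne_apply, map_smul, inner_smul_right, inner_sub_right,
    inner_add_right, orthonormal_iff_ite.mp hON]
  by_cases hi : i = i₀ <;> by_cases hj : j = i₀
  · subst hi hj
    simp [hdiag, hv]
  · subst hi
    simp [Ne.symm hj, hrow j hj, ← mul_assoc]
  · subst hj
    simp [hi, hcol i hi, ← mul_assoc]
  · simp [hi, Ne.symm hj]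

/-- For the gapped family `H_s` with nondegenerate ground state `ψ 0 s`, the
ground-state projector `P₀(s) = |ψ₀(s)⟩⟨ψ₀(s)|` satisfies
`∂_s P₀(s) = i [D_s, P₀(s)]` where `D_s` is the exact quasi-adiabatic
continuation operator. -/
theorem quasi_adiabatic_projector {V : Type*} [NormedAddCommGroup V]
    [InnerProductSpace ℂ V] [FiniteDimensional ℂ V] (n : ℕ)
    (Hs Hder : ℝ → (V →L[ℂ] V)) (hH : ∀ s, HasDerivAt Hs (Hder s) s)
    (hherm : ∀ s, IsSelfAdjoint (Hs s))
    (ψ : Fin (n + 1) → ℝ → V) (En : Fin (n + 1) → ℝ → ℝ)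
    (hON : ∀ s, Orthonormal ℂ (fun i => ψ i s))
    (hcomplete : ∀ s (v : V), v = ∑ i, (inner ℂ (ψ i s) v : ℂ) • ψ i s)
    (heig : ∀ i s, Hs s (ψ i s) = ((En i s : ℝ) : ℂ) • ψ i s)
    (ΔE : ℝ) (hΔE : 0 < ΔE)
    (hgap : ∀ i s, i ≠ 0 → En 0 s + ΔE ≤ En i s)
    (F : ℝ → ℂ) (hFint : Integrable F) (hFodd : ∀ t, F (-t) = -F t)
    (hFhat : ∀ ω : ℝ, 1 ≤ |ω| →
      ∫ t : ℝ, F t * Complex.exp (Complex.I * ω * t) = -1 / (ω : ℂ))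
    (ψd : ℝ → V) (hψd : ∀ s, HasDerivAt (fun r => ψ 0 r) (ψd s) s)
    (P : ℝ → (V →L[ℂ] V))
    (hP : ∀ s (v : V), P s v = (inner ℂ (ψ 0 s) v : ℂ) • ψ 0 s) (s : ℝ) :
    HasDerivAt P (Complex.I •
      (qaOp F ΔE (Hs s) (Hder s) ∘L P s - P s ∘L qaOp F ΔE (Hs s) (Hder s))) s := by
  have hFΔE : Integrable fun t => F (ΔE * t) := hFint.comp_mul_left' hΔE.ne'
  have hnorm : ∀ r, ‖ψ 0 r‖ = 1 := fun r => (hON r).1 0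
  have hsep : ∀ i, i ≠ 0 → ΔE ≤ |En i s - En 0 s| := fun i hi => by
    rw [abs_of_nonneg] <;> linarith [hgap i s hi]
  have hpert : ∀ i, i ≠ 0 → inner ℂ (ψ i s) (Hder s (ψ 0 s)) =
      ((En 0 s - En i s : ℝ) : ℂ) * inner ℂ (ψ i s) (ψd s) := fun i hi =>
    inner_deriv_apply_eq_of_eigenvector (hH s) (hψd s) hnorm (heig 0) (hherm s) (heig i s)
      ((hON s).2 hi)
  have hspan : ⊤ ≤ Submodule.span ℂ (Set.range fun i => ψ i s) := fun v _ => by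
    rw [hcomplete s v]
    exact Submodule.sum_mem _ fun i _ => Submodule.smul_mem _ _ (Submodule.subset_span ⟨i, rfl⟩)
  rw [show P = fun r => rankOne ℂ (ψ 0 r) (ψ 0 r) from
    funext fun r => ContinuousLinearMap.ext (hP r)]
  refine (hasDerivAt_rankOne (hψd s) (hψd s)).congr_deriv
    (I_smul_commutator_rankOne_self (hON s) hspan 0 _ _
      ((hherm s).inner_qaOp_apply_of_eq hFodd hFΔE _ (heig 0 s) (heig 0 s))
      (fun i hi => ?_) (fun j hj => ?_)
      (inner_add_inner_eq_zero_of_norm_eq_one (hψd s) hnorm)).symm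
  · refine ((hherm s).inner_qaOp_apply_of_inner_apply_eq hFhat hΔE hFΔE (heig i s) (heig 0 s)
      (hsep i hi) (w := -inner ℂ (ψ i s) (ψd s)) ?_).trans (by ring)
    rw [hpert i hi]
    push_cast
    ring
  · refine (hherm s).inner_qaOp_apply_of_inner_apply_eq hFhat hΔE hFΔE (heig 0 s) (heig j s)
      (abs_sub_comm (En j s) _ ▸ hsep j hj) ?_
    calc inner ℂ (ψ 0 s) (Hder s (ψ j s)) = conj (inner ℂ (ψ j s) (Hder s (ψ 0 s))) := by
          rw [inner_conj_symm]
          exact (((hH s).isSelfAdjoint hherm).isSymmetric _ _).symm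
      _ = _ := by rw [hpert j hj, map_mul, conj_ofReal, inner_conj_symm]
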